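/- For a poset L, the following are equivalent: (1) L is continuous; (2) L has one-step closure and is exact; (3) A' is a lower set for every A ⊆ L and L is exact; (4) D' is a lower set for every directed subset D of L and L is exact. -/

import Mathlib

open Set

section OrderDefs

variable {L : Type*} [Preorder L]

/-- Downward closure `↓A`. -/
def dw (A : Set L) : Set L := {x | ∃ a ∈ A, x ≤ a}

/-- Upward closure `↑A`. -/
def up (A : Set L) : Set L := {x | ∃ a ∈ A, a ≤ x}

/-- Scott closure of a set. -/
def scottCl (A : Set L) : Set L := @closure L (Topology.scott L Set.univ) A

/-- `A' = {x : ∃ directed D ⊆ ↓A with x = sup D}`. -/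
def oneStep (A : Set L) : Set L :=
  {x | ∃ D : Set L, D ⊆ dw A ∧ D.Nonempty ∧ DirectedOn (· ≤ ·) D ∧ IsLUB D x}

/-- `A'' = {x : ∃ directed D ⊆ ↓A with x ≤ sup D}`. -/
def weakOneStep (A : Set L) : Set L :=
  {x | ∃ D : Set L, D ⊆ dw A ∧ D.Nonempty ∧ DirectedOn (· ≤ ·) D ∧ ∃ y, IsLUB D y ∧ x ≤ y}

/-- A poset has one-step closure if `cl(A) = A'` for all `A`. -/
def HasOneStepClosure (L : Type*) [Preorder L] : Prop :=
  ∀ A : Set L, scottCl A = oneStep A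

/-- A poset has weak one-step closure if `cl(A) = A''` for all `A`. -/
def HasWeakOneStepClosure (L : Type*) [Preorder L] : Prop :=
  ∀ A : Set L, scottCl A = weakOneStep A

/-- Meet continuity: `x ≤ sup D` implies `x ∈ cl(↓D ∩ ↓x)`. -/
def MeetContinuous (L : Type*) [Preorder L] : Prop :=
  ∀ x : L, ∀ D : Set L, D.Nonempty → DirectedOn (· ≤ ·) D → ∀ s, IsLUB D s → x ≤ s →
    x ∈ scottCl (dw D ∩ dw ({x} : Set L))

/-- The way-below relation `x ≪ y`. -/
def wayBelow (x y : L) : Prop :=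
  ∀ D : Set L, D.Nonempty → DirectedOn (· ≤ ·) D → ∀ s, IsLUB D s → y ≤ s →
    (D ∩ up ({x} : Set L)).Nonempty

/-- The weakly way-below relation `x ≪_w y`. -/
def weaklyWayBelow (x y : L) : Prop :=
  ∀ D : Set L, D.Nonempty → DirectedOn (· ≤ ·) D → IsLUB D y →
    (D ∩ up ({x} : Set L)).Nonempty

/-- A continuous poset: each `⇓x` is directed with supremum `x`. -/
def ContinuousPoset (L : Type*) [Preorder L] : Prop :=
  ∀ x : L, {y | wayBelow y x}.Nonempty ∧ DirectedOn (· ≤ ·) {y | wayBelow y x} ∧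
    IsLUB {y | wayBelow y x} x

/-- An exact poset: each `⇓_w x` is directed with supremum `x`. -/
def ExactPoset (L : Type*) [Preorder L] : Prop :=
  ∀ x : L, {y | weaklyWayBelow y x}.Nonempty ∧ DirectedOn (· ≤ ·) {y | weaklyWayBelow y x} ∧
    IsLUB {y | weaklyWayBelow y x} x

/-- `F ≪ x` for a set `F`: every directed `D` with `sup D ≥ x` meets `↑F`. -/
def finWayBelow (F : Set L) (x : L) : Prop :=
  ∀ D : Set L, D.Nonempty → DirectedOn (· ≤ ·) D → ∀ s, IsLUB D s → x ≤ s →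
    (D ∩ up F).Nonempty

/-- A quasicontinuous poset: each `fin(x)` is a directed family (Smyth preorder)
with `↑x = ⋂_{F ∈ fin(x)} ↑F`. -/
def QuasicontinuousPoset (L : Type*) [Preorder L] : Prop :=
  ∀ x : L, {F : Set L | F.Finite ∧ finWayBelow F x}.Nonempty ∧
    DirectedOn (fun F G => up G ⊆ up F) {F : Set L | F.Finite ∧ finWayBelow F x} ∧
    up ({x} : Set L) = ⋂ F ∈ {F : Set L | F.Finite ∧ finWayBelow F x}, up F

/-- A dcpo: every (nonempty) directed subset has a least upper bound. -/
def IsDcpo (L : Type*) [Preorder L] : Prop :=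
  ∀ D : Set L, D.Nonempty → DirectedOn (· ≤ ·) D → ∃ x, IsLUB D x

end OrderDefs

/-!
In a continuous poset the set `{x | ⇓x ⊆ ↓A}` contains `A`, is a lower set, and, by the
interpolation property, is closed under directed suprema; so `cl(A) ⊆ A'`, with `⇓x` itself
witnessing `x ∈ A'`. Conversely, if `D'` is a lower set and `x ≤ sup D`, then `x` is the
supremum of a directed subset of `↓D`, so `y ≪_w x` already forces `y ≪ x`. Once `≪_w` and `≪` coincide, exactness and continuity are the same condition.
-/

open Topology

section ScottClosure

variable {L : Type*} [Preorder L] {A S : Set L}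

lemma isClosed_scott_iff :
    IsClosed[scott L univ] S ↔ IsLowerSet S ∧ DirSupClosed S :=
  let _ := scott L univ
  have : IsScott L univ := ⟨rfl⟩
  IsScott.isClosed_iff_isLowerSet_and_dirSupClosed

lemma isLowerSet_scottCl (A : Set L) : IsLowerSet (scottCl A) :=
  (isClosed_scott_iff.1 (@isClosed_closure L (scott L univ) A)).1

lemma dirSupClosed_scottCl (A : Set L) : DirSupClosed (scottCl A) :=
  (isClosed_scott_iff.1 (@isClosed_closure L (scott L univ) A)).2

lemma scottCl_minimal (hAS : A ⊆ S) (hlow : IsLowerSet S) (hsup : DirSupClosed S) :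
    scottCl A ⊆ S :=
  @closure_minimal L (scott L univ) A S hAS (isClosed_scott_iff.2 ⟨hlow, hsup⟩)

lemma dw_subset_scottCl (A : Set L) : dw A ⊆ scottCl A := fun _ ⟨_, ha, hxa⟩ =>
  isLowerSet_scottCl A hxa (@subset_closure L (scott L univ) A _ ha)

lemma oneStep_subset_scottCl (A : Set L) : oneStep A ⊆ scottCl A := by
  rintro x ⟨D, hDA, hD, hdir, hlub⟩
  exact dirSupClosed_scottCl A (hDA.trans (dw_subset_scottCl A)) hD hdir hlub

end ScottClosure

section WayBelow

variable {L : Type*} [Preorder L] {x y z : L}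

lemma mem_up_singleton : x ∈ up ({y} : Set L) ↔ y ≤ x :=
  ⟨fun ⟨_, ha, h⟩ => mem_singleton_iff.1 ha ▸ h, fun h => ⟨y, rfl, h⟩⟩

lemma wayBelow.le (h : wayBelow y x) : y ≤ x := by
  obtain ⟨d, hd, hyd⟩ :=
    h {x} (singleton_nonempty x) (directedOn_singleton x) x isLUB_singleton le_rfl
  exact (mem_up_singleton.1 hyd).trans (mem_singleton_iff.1 hd).le

lemma wayBelow.mono_left (h : wayBelow y x) (hzy : z ≤ y) : wayBelow z x :=
  fun D hD hdir s hs hxs =>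
    let ⟨d, hd, hyd⟩ := h D hD hdir s hs hxs
    ⟨d, hd, mem_up_singleton.2 (hzy.trans (mem_up_singleton.1 hyd))⟩

lemma wayBelow.mono_right (h : wayBelow y x) (hxz : x ≤ z) : wayBelow y z :=
  fun D hD hdir s hs hzs => h D hD hdir s hs (hxz.trans hzs)

lemma wayBelow.weaklyWayBelow (h : wayBelow y x) : weaklyWayBelow y x :=
  fun D hD hdir hs => h D hD hdir x hs le_rfl

lemma exactPoset_iff_continuousPoset (h : ∀ x y : L, weaklyWayBelow y x ↔ wayBelow y x) :
    ExactPoset L ↔ ContinuousPoset L := by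
  simp only [ExactPoset, ContinuousPoset, h]

lemma weaklyWayBelow_iff_wayBelow_of_isLowerSet_oneStep
    (hlow : ∀ D : Set L, D.Nonempty → DirectedOn (· ≤ ·) D → IsLowerSet (oneStep D)) :
    weaklyWayBelow y x ↔ wayBelow y x := by
  refine ⟨fun h D hD hdir s hs hxs => ?_, wayBelow.weaklyWayBelow⟩
  have hsD : s ∈ oneStep D := ⟨D, fun d hd => ⟨d, hd, le_rfl⟩, hD, hdir, hs⟩
  obtain ⟨E, hED, hE, hEdir, hElub⟩ := hlow D hD hdir hxs hsD
  obtain ⟨e, heE, hye⟩ := h E hE hEdir hElub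
  obtain ⟨d, hdD, hed⟩ := hED heE
  exact ⟨d, hdD, mem_up_singleton.2 ((mem_up_singleton.1 hye).trans hed)⟩

end WayBelow

namespace ContinuousPoset

variable {L : Type*} [Preorder L] {x y : L}

lemma exists_wayBelow_wayBelow (hL : ContinuousPoset L) (h : wayBelow y x) :
    ∃ z, wayBelow y z ∧ wayBelow z x := by
  set E : Set L := {w | ∃ z, wayBelow w z ∧ wayBelow z x}
  have hE : E.Nonempty := by
    obtain ⟨z, hz⟩ := (hL x).1
    obtain ⟨w, hw⟩ := (hL z).1
    exact ⟨w, z, hw, hz⟩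
  have hEdir : DirectedOn (· ≤ ·) E := by
    rintro w₁ ⟨z₁, hw₁, hz₁⟩ w₂ ⟨z₂, hw₂, hz₂⟩
    obtain ⟨z, hz, hz₁z, hz₂z⟩ := (hL x).2.1 z₁ hz₁ z₂ hz₂
    obtain ⟨w, hw, hw₁w, hw₂w⟩ :=
      (hL z).2.1 w₁ (hw₁.mono_right hz₁z) w₂ (hw₂.mono_right hz₂z)
    exact ⟨w, ⟨z, hw, hz⟩, hw₁w, hw₂w⟩
  have hElub : IsLUB E x := by
    refine ⟨fun w ⟨z, hw, hz⟩ => hw.le.trans hz.le, fun b hb => ?_⟩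
    exact (hL x).2.2.2 fun z hz => (hL z).2.2.2 fun w hw => hb ⟨z, hw, hz⟩
  obtain ⟨w, ⟨z, hwz, hzx⟩, hyw⟩ := h E hE hEdir x hElub le_rfl
  exact ⟨z, hwz.mono_left (mem_up_singleton.1 hyw), hzx⟩

lemma scottCl_subset_oneStep (hL : ContinuousPoset L) (A : Set L) :
    scottCl A ⊆ oneStep A := by
  have hsub : scottCl A ⊆ {x | ∀ y, wayBelow y x → y ∈ dw A} := by
    refine scottCl_minimal (fun a ha y hy => ⟨a, ha, hy.le⟩)
      (fun a b hba ha y hy => ha y (hy.mono_right hba)) ?_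
    rintro D hDS hD hdir s hs y hy
    obtain ⟨z, hyz, hzs⟩ := hL.exists_wayBelow_wayBelow hy
    obtain ⟨d, hd, hzd⟩ := hzs D hD hdir s hs le_rfl
    exact hDS hd y (hyz.mono_right (mem_up_singleton.1 hzd))
  intro x hx
  exact ⟨{y | wayBelow y x}, fun y hy => hsub hx y hy, (hL x).1, (hL x).2.1, (hL x).2.2⟩

lemma hasOneStepClosure (hL : ContinuousPoset L) : HasOneStepClosure L := fun A =>
  (hL.scottCl_subset_oneStep A).antisymm (oneStep_subset_scottCl A)

end ContinuousPoset

lemma HasOneStepClosure.isLowerSet_oneStep {L : Type*} [Preorder L]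
    (hcl : HasOneStepClosure L) (A : Set L) : IsLowerSet (oneStep A) :=
  hcl A ▸ isLowerSet_scottCl A

lemma ContinuousPoset.exactPoset {L : Type*} [Preorder L] (hL : ContinuousPoset L) :
    ExactPoset L :=
  (exactPoset_iff_continuousPoset fun _ _ => weaklyWayBelow_iff_wayBelow_of_isLowerSet_oneStep
    fun D _ _ => hL.hasOneStepClosure.isLowerSet_oneStep D).2 hL

/-- For a poset `L`, the following are equivalent: (1) `L` is continuous; (2) `L` has
one-step closure and is exact; (3) `A'` is a lower set for every `A` and `L` is exact;
(4) `D'` is a lower set for every directed `D` and `L` is exact. -/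
theorem continuous_tfae {L : Type*} [PartialOrder L] :
    [ContinuousPoset L,
     HasOneStepClosure L ∧ ExactPoset L,
     (∀ A : Set L, IsLowerSet (oneStep A)) ∧ ExactPoset L,
     (∀ D : Set L, D.Nonempty → DirectedOn (· ≤ ·) D → IsLowerSet (oneStep D)) ∧
       ExactPoset L].TFAE := by
  tfae_have 1 → 2
  | hL => ⟨hL.hasOneStepClosure, hL.exactPoset⟩
  tfae_have 2 → 3
  | ⟨hcl, hex⟩ => ⟨hcl.isLowerSet_oneStep, hex⟩
  tfae_have 3 → 4
  | ⟨hlow, hex⟩ => ⟨fun D _ _ => hlow D, hex⟩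
  tfae_have 4 → 1
  | ⟨hlow, hex⟩ => (exactPoset_iff_continuousPoset fun _ _ =>
      weaklyWayBelow_iff_wayBelow_of_isLowerSet_oneStep hlow).1 hex
  tfae_finish
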